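/- arXiv:1907.11417 — 4 statements merged into one kernel-verified Lean document; each statement's English description precedes it below -/
import Mathlib

section
/- For every basic rotation r (rotating the leftmost or rightmost point of one row to the other row, with color inversion) and every two-colored partition p, the analyzer is invariant: Z({p^r}) = Z({p}), where Z = (F, V, Σ, L, K, X). -/
noncomputable section
attribute [local instance] Classical.propDecidable

/-- A two-colored partition: two rows of points colored white (`true`) or black (`false`),
together with a set partition (setoid) of all points into blocks. -/
structure TCP where
  upper : ℕ
  lower : ℕ
  upColor : Fin upper → Bool
  loColor : Fin lower → Bool
  rel : Setoid (Fin upper ⊕ Fin lower)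

namespace TCP

/-- The points of a partition. -/
abbrev Point (p : TCP) := Fin p.upper ⊕ Fin p.lower

/-- Native color of a point. -/
def color (p : TCP) : p.Point → Bool
  | .inl j => p.upColor j
  | .inr i => p.loColor i

/-- Normalized color: inverted on the upper row. -/
def ncolor (p : TCP) : p.Point → Bool
  | .inl j => !(p.upColor j)
  | .inr i => p.loColor i

/-- Sign of a point: `+1` for normalized white, `-1` for normalized black. -/
def sgn (p : TCP) (x : p.Point) : ℤ := if p.ncolor x then 1 else -1

/-- Color sum of a finite set of points. -/
def csum (p : TCP) (S : Finset p.Point) : ℤ := ∑ x ∈ S, p.sgn x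

/-- Total color sum Σ(p). -/
def tsum (p : TCP) : ℤ := p.csum Finset.univ

/-- Total number of points. -/
def size (p : TCP) : ℕ := p.upper + p.lower

/-- Position in the counter-clockwise cyclic order: lower points left to right,
then upper points right to left. -/
def pos (p : TCP) : p.Point → ℕ
  | .inr i => i
  | .inl j => p.lower + (p.upper - 1 - j)

/-- Cyclic position of `y` relative to `x`. -/
def relpos (p : TCP) (x y : p.Point) : ℕ := (p.size + p.pos y - p.pos x) % p.size

/-- Half-open cyclic interval `]x,y]`. -/
def Ioc (p : TCP) (x y : p.Point) : Finset p.Point :=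
  Finset.univ.filter (fun z => 0 < p.relpos x z ∧ p.relpos x z ≤ p.relpos x y)

/-- Open cyclic interval `]x,y[`. -/
def Ioo (p : TCP) (x y : p.Point) : Finset p.Point :=
  Finset.univ.filter (fun z => 0 < p.relpos x z ∧ p.relpos x z < p.relpos x y)

/-- The color distance between two points. -/
def cdist (p : TCP) (x y : p.Point) : ℤ :=
  if x = y then p.tsum
  else if p.ncolor x = p.ncolor y then p.csum (p.Ioc x y)
  else p.csum (p.Ioo x y)

/-- The block of a point. -/
def blockOf (p : TCP) (x : p.Point) : Finset p.Point :=
  Finset.univ.filter (fun y => p.rel.r x y)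

/-- A finite set of points is a block of `p`. -/
def IsBlock (p : TCP) (B : Finset p.Point) : Prop := ∃ x, B = p.blockOf x

/-- `(a,b,c,d)` is ordered in the cyclic order of `p`. -/
def Ordered4 (p : TCP) (a b c d : p.Point) : Prop :=
  0 < p.relpos a b ∧ p.relpos a b < p.relpos a c ∧ p.relpos a c < p.relpos a d

/-- Two sets of points cross each other. -/
def Cross (p : TCP) (B₁ B₂ : Finset p.Point) : Prop :=
  ∃ a ∈ B₁, ∃ b ∈ B₁, ∃ a' ∈ B₂, ∃ b' ∈ B₂, p.Ordered4 a a' b b'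

/-! ### The analyzer -/

/-- Set of block sizes. -/
def Fset (S : Set TCP) : Set ℕ :=
  {n | ∃ p ∈ S, ∃ B : Finset p.Point, p.IsBlock B ∧ B.card = n}

/-- Set of block color sums. -/
def Vset (S : Set TCP) : Set ℤ :=
  {v | ∃ p ∈ S, ∃ B : Finset p.Point, p.IsBlock B ∧ p.csum B = v}

/-- Set of total color sums. -/
def Sset (S : Set TCP) : Set ℤ := {s | ∃ p ∈ S, p.tsum = s}

/-- Set of color distances between cyclically subsequent legs of the same block
having the same normalized color. -/
def Lset (S : Set TCP) : Set ℤ :=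
  {d | ∃ p ∈ S, ∃ B : Finset p.Point, p.IsBlock B ∧ ∃ a ∈ B, ∃ b ∈ B, a ≠ b ∧
        p.Ioo a b ∩ B = ∅ ∧ p.ncolor a = p.ncolor b ∧ p.cdist a b = d}

/-- Set of color distances between cyclically subsequent legs of the same block
having different normalized colors. -/
def Kset (S : Set TCP) : Set ℤ :=
  {d | ∃ p ∈ S, ∃ B : Finset p.Point, p.IsBlock B ∧ ∃ a ∈ B, ∃ b ∈ B, a ≠ b ∧
        p.Ioo a b ∩ B = ∅ ∧ p.ncolor a ≠ p.ncolor b ∧ p.cdist a b = d}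

/-- Set of color distances between legs of two crossing blocks. -/
def Xset (S : Set TCP) : Set ℤ :=
  {d | ∃ p ∈ S, ∃ B₁ B₂ : Finset p.Point, p.IsBlock B₁ ∧ p.IsBlock B₂ ∧ B₁ ≠ B₂ ∧
        p.Cross B₁ B₂ ∧ ∃ a ∈ B₁, ∃ b ∈ B₂, p.cdist a b = d}

/-- The parameter domain. -/
abbrev Param := Set ℕ × Set ℤ × Set ℤ × Set ℤ × Set ℤ × Set ℤ

/-- The analyzer `Z = (F, V, Σ, L, K, X)`. -/
def Z (S : Set TCP) : Param := (Fset S, Vset S, Sset S, Lset S, Kset S, Xset S)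

/-! ### Operations on partitions -/

/-- Componentwise relation on a sum type. -/
def sumRel {α β : Type*} (s : α → α → Prop) (t : β → β → Prop) : α ⊕ β → α ⊕ β → Prop
  | .inl a, .inl b => s a b
  | .inr a, .inr b => t a b
  | _, _ => False

/-- Componentwise setoid on a sum type. -/
def sumSetoid {α β : Type*} (s : Setoid α) (t : Setoid β) : Setoid (α ⊕ β) where
  r := sumRel s.r t.r
  iseqv := by
    refine ⟨?_, ?_, ?_⟩
    · rintro (a | a) <;> exact Setoid.refl _
    · rintro (a | a) (b | b) h <;> first | exact Setoid.symm h | exact h.elim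
    · rintro (a | a) (b | b) (c | c) h₁ h₂ <;>
        first | exact Setoid.trans h₁ h₂ | exact h₁.elim | exact h₂.elim

/-- Identification of the points of a tensor product with a sum of points. -/
def ptmap (p q : TCP) :
    (Fin (p.upper + q.upper) ⊕ Fin (p.lower + q.lower)) → (p.Point ⊕ q.Point)
  | .inl j => (finSumFinEquiv.symm j).elim (fun a => .inl (.inl a)) (fun a => .inr (.inl a))
  | .inr i => (finSumFinEquiv.symm i).elim (fun a => .inl (.inr a)) (fun a => .inr (.inr a))

/-- Tensor product: horizontal concatenation. -/
def tensor (p q : TCP) : TCP where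
  upper := p.upper + q.upper
  lower := p.lower + q.lower
  upColor := fun j => (finSumFinEquiv.symm j).elim p.upColor q.upColor
  loColor := fun i => (finSumFinEquiv.symm i).elim p.loColor q.loColor
  rel := Setoid.comap (ptmap p q) (sumSetoid p.rel q.rel)

/-- Embedding of the points of `p` into the points of `p.tensor q`. -/
def tinl (p q : TCP) : p.Point → (p.tensor q).Point
  | .inl j => Sum.inl (Fin.castAdd q.upper j)
  | .inr i => Sum.inr (Fin.castAdd q.lower i)

/-- Embedding of the points of `q` into the points of `p.tensor q`. -/
def tinr (p q : TCP) : q.Point → (p.tensor q).Point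
  | .inl j => Sum.inl (Fin.natAdd p.upper j)
  | .inr i => Sum.inr (Fin.natAdd p.lower i)

/-- Involution: swapping the rows. -/
def invol (p : TCP) : TCP where
  upper := p.lower
  lower := p.upper
  upColor := p.loColor
  loColor := p.upColor
  rel := Setoid.comap Sum.swap p.rel

/-- `(p, q)` is composable: the upper row of `p` matches the lower row of `q`. -/
structure Composable (p q : TCP) : Prop where
  len : p.upper = q.lower
  col : ∀ j : Fin p.upper, p.upColor j = q.loColor (Fin.cast len j)

/-- Generating relation for the composition of `p` and `q`. -/
def compRel (p q : TCP) (h : p.upper = q.lower) :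
    (q.Point ⊕ p.Point) → (q.Point ⊕ p.Point) → Prop := fun x y =>
  (∃ a b, x = .inl a ∧ y = .inl b ∧ q.rel.r a b) ∨
  (∃ a b, x = .inr a ∧ y = .inr b ∧ p.rel.r a b) ∨
  (∃ j : Fin p.upper, x = .inl (.inr (Fin.cast h j)) ∧ y = .inr (.inl j)) ∨
  (∃ j : Fin p.upper, y = .inl (.inr (Fin.cast h j)) ∧ x = .inr (.inl j))

/-- Composition: vertical concatenation, with blocks joined along the middle row. -/
def comp (p q : TCP) (h : Composable p q) : TCP where
  upper := q.upper
  lower := p.lower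
  upColor := q.upColor
  loColor := p.loColor
  rel := Setoid.comap
    (fun x : Fin q.upper ⊕ Fin p.lower => match x with
      | .inl j => Sum.inl (Sum.inl j : q.Point)
      | .inr i => Sum.inr (Sum.inr i : p.Point))
    (Relation.EqvGen.setoid (compRel p q h.len))

/-- The empty partition. -/
def emptyP : TCP := ⟨0, 0, Fin.elim0, Fin.elim0, ⊤⟩

/-- The identity partition of color `c`: one upper and one lower point of color `c`
joined in one block. -/
def idPart (c : Bool) : TCP := ⟨1, 1, fun _ => c, fun _ => c, ⊤⟩

/-- The one-row pair partition with two lower points of colors `c₁`, `c₂` in one block. -/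
def lpair (c₁ c₂ : Bool) : TCP := ⟨0, 2, Fin.elim0, fun i => if i = 0 then c₁ else c₂, ⊤⟩

/-- A category of two-colored partitions. -/
def IsCategory (C : Set TCP) : Prop :=
  emptyP ∈ C ∧ idPart true ∈ C ∧ idPart false ∈ C ∧
  lpair true false ∈ C ∧ lpair false true ∈ C ∧
  (∀ p q, p ∈ C → q ∈ C → p.tensor q ∈ C) ∧
  (∀ p, p ∈ C → p.invol ∈ C) ∧
  (∀ p q (h : Composable p q), p ∈ C → q ∈ C → comp p q h ∈ C)

/-! ### Rotations, verticolor reflection, erasing -/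

/-- Rotate the leftmost upper point down (identity if the upper row is empty). -/
def rotDownL (p : TCP) : TCP :=
  if h : 0 < p.upper then
    { upper := p.upper - 1
      lower := p.lower + 1
      upColor := fun j => p.upColor ⟨j + 1, by have := j.isLt; omega⟩
      loColor := fun i => Fin.cases (!(p.upColor ⟨0, h⟩)) (fun i' => p.loColor i') i
      rel := Setoid.comap
        (fun x : Fin (p.upper - 1) ⊕ Fin (p.lower + 1) => match x with
          | .inl j => (Sum.inl ⟨j + 1, by have := j.isLt; omega⟩ : p.Point)
          | .inr i => Fin.cases (Sum.inl ⟨0, h⟩ : p.Point) (fun i' => (Sum.inr i' : p.Point)) i)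
        p.rel }
  else p

/-- Rotate the rightmost upper point down (identity if the upper row is empty). -/
def rotDownR (p : TCP) : TCP :=
  if h : 0 < p.upper then
    { upper := p.upper - 1
      lower := p.lower + 1
      upColor := fun j => p.upColor ⟨j, by have := j.isLt; omega⟩
      loColor := fun i =>
        Fin.lastCases (!(p.upColor ⟨p.upper - 1, by omega⟩)) (fun i' => p.loColor i') i
      rel := Setoid.comap
        (fun x : Fin (p.upper - 1) ⊕ Fin (p.lower + 1) => match x with
          | .inl j => (Sum.inl ⟨j, by have := j.isLt; omega⟩ : p.Point)
          | .inr i => Fin.lastCases (Sum.inl ⟨p.upper - 1, by omega⟩ : p.Point)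
              (fun i' => (Sum.inr i' : p.Point)) i)
        p.rel }
  else p

/-- Rotate the leftmost lower point up (identity if the lower row is empty). -/
def rotUpL (p : TCP) : TCP :=
  if h : 0 < p.lower then
    { upper := p.upper + 1
      lower := p.lower - 1
      upColor := fun j => Fin.cases (!(p.loColor ⟨0, h⟩)) (fun j' => p.upColor j') j
      loColor := fun i => p.loColor ⟨i + 1, by have := i.isLt; omega⟩
      rel := Setoid.comap
        (fun x : Fin (p.upper + 1) ⊕ Fin (p.lower - 1) => match x with
          | .inl j => Fin.cases (Sum.inr ⟨0, h⟩ : p.Point) (fun j' => (Sum.inl j' : p.Point)) j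
          | .inr i => (Sum.inr ⟨i + 1, by have := i.isLt; omega⟩ : p.Point))
        p.rel }
  else p

/-- Rotate the rightmost lower point up (identity if the lower row is empty). -/
def rotUpR (p : TCP) : TCP :=
  if h : 0 < p.lower then
    { upper := p.upper + 1
      lower := p.lower - 1
      upColor := fun j =>
        Fin.lastCases (!(p.loColor ⟨p.lower - 1, by omega⟩)) (fun j' => p.upColor j') j
      loColor := fun i => p.loColor ⟨i, by have := i.isLt; omega⟩
      rel := Setoid.comap
        (fun x : Fin (p.upper + 1) ⊕ Fin (p.lower - 1) => match x with
          | .inl j => Fin.lastCases (Sum.inr ⟨p.lower - 1, by omega⟩ : p.Point)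
              (fun j' => (Sum.inl j' : p.Point)) j
          | .inr i => (Sum.inr ⟨i, by have := i.isLt; omega⟩ : p.Point))
        p.rel }
  else p

/-- Verticolor reflection: reverse both rows and invert all colors. -/
def vreflect (p : TCP) : TCP where
  upper := p.upper
  lower := p.lower
  upColor := fun j => !(p.upColor j.rev)
  loColor := fun i => !(p.loColor i.rev)
  rel := Setoid.comap (Sum.map Fin.rev Fin.rev) p.rel

/-- `{a, b}` is a turn: two cyclically consecutive points of inverse normalized colors. -/
def IsTurn (p : TCP) (a b : p.Point) : Prop :=
  p.relpos a b = 1 ∧ p.ncolor a ≠ p.ncolor b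

/-- `e` identifies the points of `q` with the points of `p` outside `{a, b}`, preserving
rows, colors and order, and `q` carries the block structure obtained from `p` by erasing
`{a, b}` and merging all blocks meeting `{a, b}`. -/
def IsErasingMap (p : TCP) (a b : p.Point) (q : TCP) (e : q.Point → p.Point) : Prop :=
  Function.Injective e ∧
  Set.range e = {x | x ≠ a ∧ x ≠ b} ∧
  (∀ j : Fin q.upper, ∃ j', e (.inl j) = Sum.inl j') ∧
  (∀ i : Fin q.lower, ∃ i', e (.inr i) = Sum.inr i') ∧
  (∀ j₁ j₂ : Fin q.upper, ∀ j₁' j₂' : Fin p.upper,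
    e (.inl j₁) = Sum.inl j₁' → e (.inl j₂) = Sum.inl j₂' → (j₁ < j₂ ↔ j₁' < j₂')) ∧
  (∀ i₁ i₂ : Fin q.lower, ∀ i₁' i₂' : Fin p.lower,
    e (.inr i₁) = Sum.inr i₁' → e (.inr i₂) = Sum.inr i₂' → (i₁ < i₂ ↔ i₁' < i₂')) ∧
  (∀ x, q.color x = p.color (e x)) ∧
  (∀ x y, q.rel.r x y ↔
    (p.rel.r (e x) (e y) ∨
      ((p.rel.r (e x) a ∨ p.rel.r (e x) b) ∧ (p.rel.r (e y) a ∨ p.rel.r (e y) b))))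

/-- `q` is obtained from `p` by erasing the turn `{a, b}`. -/
def IsErasing (p : TCP) (a b : p.Point) (q : TCP) : Prop :=
  p.IsTurn a b ∧ ∃ e : q.Point → p.Point, IsErasingMap p a b q e

/-! A basic rotation moves a corner point to the other row and inverts its native color, so it
keeps the normalized color of every point; it keeps the counter-clockwise order of the points,
so all positions are shifted by the same amount modulo the number of points (by `0` for the
right rotations, where the moved point keeps its position, and by one for the left ones, where
it wraps around); and the blocks of the rotated partition are pulled back along the point map.
All six components of `Z` are defined through cyclic order, normalized colors and blocks only,
so they are invariant under any bijection of points preserving these three structures. -/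

lemma pos_lt_size (p : TCP) (x : p.Point) : p.pos x < p.size := by
  rcases x with j | i
  · have := j.isLt; simp only [pos, size]; omega
  · have := i.isLt; simp only [pos, size]; omega

lemma pos_injective (p : TCP) : Function.Injective p.pos := by
  rintro (j | i) (j' | i') h <;> simp only [pos] at h
  · have := j.isLt; have := j'.isLt
    exact congrArg Sum.inl (Fin.ext (by omega))
  · omega
  · omega
  · exact congrArg Sum.inr (Fin.ext h)

lemma card_point (p : TCP) : Fintype.card p.Point = p.size := by
  simp only [Point, Fintype.card_sum, Fintype.card_fin, size]

structure Iso (q p : TCP) where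
  equiv : q.Point ≃ p.Point
  relpos_eq : ∀ x y, p.relpos (equiv x) (equiv y) = q.relpos x y
  ncolor_eq : ∀ x, p.ncolor (equiv x) = q.ncolor x
  rel_iff : ∀ x y, p.rel.r (equiv x) (equiv y) ↔ q.rel.r x y

namespace Iso

variable {q p : TCP} (e : Iso q p)

def symm : Iso p q where
  equiv := e.equiv.symm
  relpos_eq x y := by simpa using (e.relpos_eq (e.equiv.symm x) (e.equiv.symm y)).symm
  ncolor_eq x := by simpa using (e.ncolor_eq (e.equiv.symm x)).symm
  rel_iff x y := by simpa using (e.rel_iff (e.equiv.symm x) (e.equiv.symm y)).symm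

lemma csum_image (B : Finset q.Point) : p.csum (B.image e.equiv) = q.csum B := by
  rw [csum, Finset.sum_image fun _ _ _ _ h => e.equiv.injective h]
  exact Finset.sum_congr rfl fun x _ => by rw [sgn, sgn, e.ncolor_eq]

lemma tsum_eq (e : Iso q p) : p.tsum = q.tsum := by
  rw [tsum, tsum, ← e.csum_image, Finset.image_univ_equiv]

lemma Ioc_image (x y : q.Point) :
    p.Ioc (e.equiv x) (e.equiv y) = (q.Ioc x y).image e.equiv := by
  ext z
  obtain ⟨w, rfl⟩ := e.equiv.surjective z
  simp [Ioc, e.relpos_eq]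

lemma Ioo_image (x y : q.Point) :
    p.Ioo (e.equiv x) (e.equiv y) = (q.Ioo x y).image e.equiv := by
  ext z
  obtain ⟨w, rfl⟩ := e.equiv.surjective z
  simp [Ioo, e.relpos_eq]

lemma cdist_eq (x y : q.Point) : p.cdist (e.equiv x) (e.equiv y) = q.cdist x y := by
  simp only [cdist, e.ncolor_eq, EmbeddingLike.apply_eq_iff_eq, e.Ioc_image, e.Ioo_image,
    e.csum_image, e.tsum_eq]

lemma blockOf_image (x : q.Point) : p.blockOf (e.equiv x) = (q.blockOf x).image e.equiv := by
  ext z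
  obtain ⟨w, rfl⟩ := e.equiv.surjective z
  simp [blockOf, e.rel_iff]

lemma isBlock_image {B : Finset q.Point} (hB : q.IsBlock B) : p.IsBlock (B.image e.equiv) := by
  obtain ⟨x, rfl⟩ := hB
  exact ⟨e.equiv x, (e.blockOf_image x).symm⟩

lemma cross_image {B₁ B₂ : Finset q.Point} (h : q.Cross B₁ B₂) :
    p.Cross (B₁.image e.equiv) (B₂.image e.equiv) := by
  obtain ⟨a, ha, b, hb, a', ha', b', hb', hord⟩ := h
  refine ⟨e.equiv a, Finset.mem_image_of_mem _ ha, e.equiv b, Finset.mem_image_of_mem _ hb,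
    e.equiv a', Finset.mem_image_of_mem _ ha', e.equiv b', Finset.mem_image_of_mem _ hb', ?_⟩
  simpa only [Ordered4, e.relpos_eq] using hord

lemma Ioo_inter_image {B : Finset q.Point} {a b : q.Point} (h : q.Ioo a b ∩ B = ∅) :
    p.Ioo (e.equiv a) (e.equiv b) ∩ B.image e.equiv = ∅ := by
  rw [e.Ioo_image, ← Finset.image_inter _ _ e.equiv.injective, h, Finset.image_empty]

lemma Fset_subset (e : Iso q p) : Fset {q} ⊆ Fset {p} := by
  rintro n ⟨_, rfl, B, hB, rfl⟩
  exact ⟨p, rfl, B.image e.equiv, e.isBlock_image hB,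
    Finset.card_image_of_injective _ e.equiv.injective⟩

lemma Vset_subset (e : Iso q p) : Vset {q} ⊆ Vset {p} := by
  rintro v ⟨_, rfl, B, hB, rfl⟩
  exact ⟨p, rfl, B.image e.equiv, e.isBlock_image hB, e.csum_image B⟩

lemma Sset_subset (e : Iso q p) : Sset {q} ⊆ Sset {p} := by
  rintro s ⟨_, rfl, rfl⟩
  exact ⟨p, rfl, e.tsum_eq⟩

lemma Lset_subset (e : Iso q p) : Lset {q} ⊆ Lset {p} := by
  rintro d ⟨_, rfl, B, hB, a, ha, b, hb, hab, hsub, hcol, rfl⟩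
  exact ⟨p, rfl, B.image e.equiv, e.isBlock_image hB, e.equiv a, Finset.mem_image_of_mem _ ha,
    e.equiv b, Finset.mem_image_of_mem _ hb, e.equiv.injective.ne hab, e.Ioo_inter_image hsub,
    by rwa [e.ncolor_eq, e.ncolor_eq], e.cdist_eq a b⟩

lemma Kset_subset (e : Iso q p) : Kset {q} ⊆ Kset {p} := by
  rintro d ⟨_, rfl, B, hB, a, ha, b, hb, hab, hsub, hcol, rfl⟩
  exact ⟨p, rfl, B.image e.equiv, e.isBlock_image hB, e.equiv a, Finset.mem_image_of_mem _ ha,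
    e.equiv b, Finset.mem_image_of_mem _ hb, e.equiv.injective.ne hab, e.Ioo_inter_image hsub,
    by rwa [e.ncolor_eq, e.ncolor_eq], e.cdist_eq a b⟩

lemma Xset_subset (e : Iso q p) : Xset {q} ⊆ Xset {p} := by
  rintro d ⟨_, rfl, B₁, B₂, h₁, h₂, hne, hcross, a, ha, b, hb, rfl⟩
  exact ⟨p, rfl, B₁.image e.equiv, B₂.image e.equiv, e.isBlock_image h₁, e.isBlock_image h₂,
    (Finset.image_injective e.equiv.injective).ne hne, e.cross_image hcross,
    e.equiv a, Finset.mem_image_of_mem _ ha, e.equiv b, Finset.mem_image_of_mem _ hb,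
    e.cdist_eq a b⟩

lemma Z_eq (e : Iso q p) : Z {q} = Z {p} := by
  simp only [Z, Prod.mk.injEq]
  exact ⟨e.Fset_subset.antisymm e.symm.Fset_subset, e.Vset_subset.antisymm e.symm.Vset_subset,
    e.Sset_subset.antisymm e.symm.Sset_subset, e.Lset_subset.antisymm e.symm.Lset_subset,
    e.Kset_subset.antisymm e.symm.Kset_subset, e.Xset_subset.antisymm e.symm.Xset_subset⟩

end Iso

lemma relpos_eq_of_pos_modEq {q p : TCP} (hsize : q.size = p.size) {c d : ℕ}
    {x y : q.Point} {x' y' : p.Point}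
    (hx : p.pos x' + c ≡ q.pos x + d [MOD p.size]) (hy : p.pos y' + c ≡ q.pos y + d [MOD p.size]) :
    p.relpos x' y' = q.relpos x y := by
  have hx' := p.pos_lt_size x'
  have hq := q.pos_lt_size x
  rw [hsize] at hq
  unfold relpos
  rw [hsize]
  refine Nat.ModEq.add_right_cancel' (p.pos x' + c) ?_
  calc p.size + p.pos y' - p.pos x' + (p.pos x' + c) = p.size + (p.pos y' + c) := by omega
    _ ≡ p.size + (q.pos y + d) [MOD p.size] := hy.add_left _
    _ = p.size + q.pos y - q.pos x + (q.pos x + d) := by omega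
    _ ≡ p.size + q.pos y - q.pos x + (p.pos x' + c) [MOD p.size] := hx.symm.add_left _

def Iso.ofPosModEq {q p : TCP} (f : q.Point → p.Point) (hsize : q.size = p.size) (c d : ℕ)
    (hpos : ∀ x, p.pos (f x) + c ≡ q.pos x + d [MOD p.size])
    (hcol : ∀ x, p.ncolor (f x) = q.ncolor x) (hrel : ∀ x y, p.rel.r (f x) (f y) ↔ q.rel.r x y) :
    Iso q p where
  equiv := Equiv.ofBijective f <| by
    refine (Fintype.bijective_iff_injective_and_card f).2 ⟨fun x y hxy => ?_, ?_⟩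
    · have hmod : q.pos x + d ≡ q.pos y + d [MOD p.size] := (hpos x).symm.trans (hxy ▸ hpos y)
      have hx := q.pos_lt_size x
      have hy := q.pos_lt_size y
      rw [hsize] at hx hy
      exact q.pos_injective ((Nat.ModEq.add_right_cancel' d hmod).eq_of_lt_of_lt hx hy)
    · rw [card_point, card_point, hsize]
  relpos_eq x y := relpos_eq_of_pos_modEq hsize (hpos x) (hpos y)
  ncolor_eq := hcol
  rel_iff := hrel

def rotDownLPoint (p : TCP) (h : 0 < p.upper) : Fin (p.upper - 1) ⊕ Fin (p.lower + 1) → p.Point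
  | .inl j => Sum.inl ⟨j + 1, by have := j.isLt; omega⟩
  | .inr i => Fin.cases (Sum.inl ⟨0, h⟩) Sum.inr i

lemma Z_rotDownL (p : TCP) : Z {p.rotDownL} = Z {p} := by
  unfold rotDownL
  split_ifs with h
  · refine (Iso.ofPosModEq (rotDownLPoint p h) (by simp only [size]; omega) 1 0 ?_ ?_
      fun _ _ => Iff.rfl).Z_eq
    · rintro (j | i)
      · have : (j : ℕ) < p.upper - 1 := j.isLt
        simp only [rotDownLPoint, pos, Nat.ModEq]
        congr 1
        omega
      · induction i using Fin.cases with
        | zero =>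
          simp only [rotDownLPoint, pos, Fin.cases_zero, Fin.val_zero, add_zero]
          exact Nat.modEq_zero_iff_dvd.2 ⟨1, by simp only [size]; omega⟩
        | succ i => simp only [rotDownLPoint, pos, Fin.cases_succ, Fin.val_succ]; rfl
    · rintro (j | i)
      · simp [rotDownLPoint, ncolor]
      · induction i using Fin.cases <;> simp [rotDownLPoint, ncolor]
  · rfl

def rotDownRPoint (p : TCP) (h : 0 < p.upper) : Fin (p.upper - 1) ⊕ Fin (p.lower + 1) → p.Point
  | .inl j => Sum.inl ⟨j, by have := j.isLt; omega⟩
  | .inr i => Fin.lastCases (Sum.inl ⟨p.upper - 1, by omega⟩) Sum.inr i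

lemma Z_rotDownR (p : TCP) : Z {p.rotDownR} = Z {p} := by
  unfold rotDownR
  split_ifs with h
  · refine (Iso.ofPosModEq (rotDownRPoint p h) (by simp only [size]; omega) 0 0 ?_ ?_
      fun _ _ => Iff.rfl).Z_eq
    · rintro (j | i)
      · have : (j : ℕ) < p.upper - 1 := j.isLt
        simp only [rotDownRPoint, pos, Nat.ModEq]
        congr 1
        omega
      · induction i using Fin.lastCases with
        | last =>
          simp only [rotDownRPoint, pos, Fin.lastCases_last, Fin.val_last, Nat.ModEq]
          congr 1
          omega
        | cast i => simp only [rotDownRPoint, pos, Fin.lastCases_castSucc, Fin.val_castSucc]; rfl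
    · rintro (j | i)
      · simp [rotDownRPoint, ncolor]
      · induction i using Fin.lastCases <;> simp [rotDownRPoint, ncolor]
  · rfl

def rotUpLPoint (p : TCP) (h : 0 < p.lower) : Fin (p.upper + 1) ⊕ Fin (p.lower - 1) → p.Point
  | .inl j => Fin.cases (Sum.inr ⟨0, h⟩) Sum.inl j
  | .inr i => Sum.inr ⟨i + 1, by have := i.isLt; omega⟩

lemma Z_rotUpL (p : TCP) : Z {p.rotUpL} = Z {p} := by
  unfold rotUpL
  split_ifs with h
  · refine (Iso.ofPosModEq (rotUpLPoint p h) (by simp only [size]; omega) 0 1 ?_ ?_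
      fun _ _ => Iff.rfl).Z_eq
    · rintro (j | i)
      · induction j using Fin.cases with
        | zero =>
          simp only [rotUpLPoint, pos, Fin.cases_zero, Fin.val_zero, add_zero]
          exact (Nat.modEq_zero_iff_dvd.2 ⟨1, by simp only [size]; omega⟩).symm
        | succ j =>
          have := j.isLt
          simp only [rotUpLPoint, pos, Fin.cases_succ, Fin.val_succ, Nat.ModEq]
          congr 1
          omega
      · simp only [rotUpLPoint, pos, Nat.ModEq]
    · rintro (j | i)
      · induction j using Fin.cases <;> simp [rotUpLPoint, ncolor]
      · simp [rotUpLPoint, ncolor]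
  · rfl

def rotUpRPoint (p : TCP) (h : 0 < p.lower) : Fin (p.upper + 1) ⊕ Fin (p.lower - 1) → p.Point
  | .inl j => Fin.lastCases (Sum.inr ⟨p.lower - 1, by omega⟩) Sum.inl j
  | .inr i => Sum.inr ⟨i, by have := i.isLt; omega⟩

lemma Z_rotUpR (p : TCP) : Z {p.rotUpR} = Z {p} := by
  unfold rotUpR
  split_ifs with h
  · refine (Iso.ofPosModEq (rotUpRPoint p h) (by simp only [size]; omega) 0 0 ?_ ?_
      fun _ _ => Iff.rfl).Z_eq
    · rintro (j | i)
      · induction j using Fin.lastCases with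
        | last =>
          simp only [rotUpRPoint, pos, Fin.lastCases_last, Fin.val_last, Nat.ModEq]
          congr 1
          omega
        | cast j =>
          have := j.isLt
          simp only [rotUpRPoint, pos, Fin.lastCases_castSucc, Fin.val_castSucc, Nat.ModEq]
          congr 1
          omega
      · simp only [rotUpRPoint, pos, Nat.ModEq]
    · rintro (j | i)
      · induction j using Fin.lastCases <;> simp [rotUpRPoint, ncolor]
      · simp [rotUpRPoint, ncolor]
  · rfl

end TCP

/-- the analyzer Z is invariant under all four basic rotations. -/
theorem stmt4 (p : TCP) :
    TCP.Z {p.rotDownL} = TCP.Z {p} ∧ TCP.Z {p.rotDownR} = TCP.Z {p} ∧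
    TCP.Z {p.rotUpL} = TCP.Z {p} ∧ TCP.Z {p.rotUpR} = TCP.Z {p} :=
  ⟨p.Z_rotDownL, p.Z_rotDownR, p.Z_rotUpL, p.Z_rotUpR⟩
end
end

section
/- The set of all two-colored partitions all of whose blocks have at most two legs is a category of two-colored partitions. -/
noncomputable section
attribute [local instance] Classical.propDecidable

/-!
A partition has blocks of at most two legs iff every point has at most one partner in its
block; this is evident for the base partitions and is preserved by tensor products and by the
involution, both of which only relabel points injectively. For a composition, consider on the
points of both factors the partner involution `σ` and the involution `τ` exchanging the two
copies of each middle point. The blocks of the composition are traced by `σ` and `τ` (the graph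
they span consists of paths and cycles), and its points are those fixed by `τ`. Every word
in `σ` and `τ` is a power of the rotation `τσ`, possibly followed by `σ`, so the block of a
`τ`-fixed point lies in a single cycle of `τσ`. Since `τ` conjugates `τσ` to its inverse, it acts
on that cycle as a reflection, and a reflection of a cycle fixes at most two of its points.
-/

theorem Int.dvd_sub_of_dvd_two_mul {g a b : ℤ} (h2a : g ∣ 2 * a) (h2b : g ∣ 2 * b)
    (ha : ¬ g ∣ a) (hb : ¬ g ∣ b) : g ∣ a - b := by
  obtain ⟨k, hk⟩ := h2a
  obtain ⟨l, hl⟩ := h2b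
  have hk' : Odd k := Int.not_even_iff_odd.1 fun ⟨k', hk'⟩ => ha ⟨k', by subst hk'; linarith⟩
  have hl' : Odd l := Int.not_even_iff_odd.1 fun ⟨l', hl'⟩ => hb ⟨l', by subst hl'; linarith⟩
  obtain ⟨n, hn⟩ := hk'.sub_odd hl'
  exact ⟨n, mul_left_cancel₀ two_ne_zero (by linear_combination hk - hl + g * hn)⟩

namespace Equiv.Perm

variable {α : Type*} {f g : Perm α} {v x y z : α}

theorem zpow_apply_eq_self_iff_minimalPeriod_dvd {n : ℤ} :
    (f ^ n) v = v ↔ (Function.minimalPeriod f v : ℤ) ∣ n :=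
  MulAction.zpow_smul_eq_iff_minimalPeriod_dvd (a := f) (b := v)

theorem SameCycle.apply_of_conj_eq_inv (hg : g * f * g⁻¹ = f⁻¹) (h : SameCycle f x y) :
    SameCycle f (g x) (g y) := by
  simpa [hg] using h.conj (g := g)

theorem SameCycle.eq_of_conj_eq_inv_of_apply_eq_self (hg : g * f * g⁻¹ = f⁻¹)
    (hv : g v = v) (hy : g y = y) (hz : g z = z) (hvy : SameCycle f v y) (hvz : SameCycle f v z)
    (hyv : y ≠ v) (hzv : z ≠ v) : y = z := by
  obtain ⟨a, rfl⟩ := hvy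
  obtain ⟨b, rfl⟩ := hvz
  have hgf (n : ℤ) : g ((f ^ n) v) = (f ^ (-n)) v := by
    have hconj : g * f ^ n * g⁻¹ = f ^ (-n) := by rw [← conj_zpow, hg, inv_zpow, zpow_neg]
    rw [← hconj, mul_apply, mul_apply, inv_eq_iff_eq.2 hv.symm]
  have hperiod (n : ℤ) (hn : g ((f ^ n) v) = (f ^ n) v) :
      (Function.minimalPeriod f v : ℤ) ∣ 2 * n := by
    rw [← zpow_apply_eq_self_iff_minimalPeriod_dvd, two_mul, zpow_add, mul_apply, ← hn, hgf,
      ← mul_apply, ← zpow_add, add_neg_cancel, zpow_zero, one_apply]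
  have hab := Int.dvd_sub_of_dvd_two_mul (hperiod a hy) (hperiod b hz)
    (mt zpow_apply_eq_self_iff_minimalPeriod_dvd.2 hyv)
    (mt zpow_apply_eq_self_iff_minimalPeriod_dvd.2 hzv)
  rw [← zpow_apply_eq_self_iff_minimalPeriod_dvd] at hab
  calc (f ^ a) v = (f ^ b) ((f ^ (a - b)) v) := by rw [← mul_apply, ← zpow_add, add_sub_cancel]
    _ = (f ^ b) v := by rw [hab]

variable {σ τ : Perm α}

theorem inv_eq_self_of_involutive (hσ : Function.Involutive σ) : σ⁻¹ = σ :=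
  inv_eq_of_mul_eq_one_left (ext hσ)

theorem conj_mul_eq_inv_of_involutive_left (hσ : Function.Involutive σ)
    (hτ : Function.Involutive τ) : σ * (τ * σ) * σ⁻¹ = (τ * σ)⁻¹ := by
  rw [mul_inv_rev, inv_eq_self_of_involutive hσ, inv_eq_self_of_involutive hτ]
  ext z; simp [hσ _]

theorem conj_mul_eq_inv_of_involutive_right (hσ : Function.Involutive σ)
    (hτ : Function.Involutive τ) : τ * (τ * σ) * τ⁻¹ = (τ * σ)⁻¹ := by
  rw [mul_inv_rev, inv_eq_self_of_involutive hσ, inv_eq_self_of_involutive hτ]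
  ext z; simp [hτ _]

theorem sameCycle_of_eqvGen_involutive (hσ : Function.Involutive σ)
    (hτ : Function.Involutive τ) {r : α → α → Prop}
    (hr : ∀ x y, r x y → y = x ∨ y = σ x ∨ y = τ x) (h : Relation.EqvGen r x y) :
    SameCycle (τ * σ) x y ∨ SameCycle (τ * σ) (σ x) y := by
  have hmap {x y : α} (h : SameCycle (τ * σ) x y) : SameCycle (τ * σ) (σ x) (σ y) :=
    h.apply_of_conj_eq_inv (conj_mul_eq_inv_of_involutive_left hσ hτ)
  refine (Equivalence.eqvGen_iff (r := fun x y =>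
    SameCycle (τ * σ) x y ∨ SameCycle (τ * σ) (σ x) y) ⟨?_, ?_, ?_⟩).1 (h.mono ?_)
  · exact fun x => .inl .rfl
  · rintro x y (h | h)
    · exact .inl h.symm
    · exact .inr (by simpa [hσ x] using (hmap h).symm)
  · rintro x y z (hxy | hxy) (hyz | hyz)
    · exact .inl (hxy.trans hyz)
    · exact .inr ((hmap hxy).trans hyz)
    · exact .inr (hxy.trans hyz)
    · exact .inl (by simpa [hσ x] using (hmap hxy).trans hyz)
  · rintro x y hxy
    rcases hr x y hxy with rfl | rfl | rfl
    · exact .inl .rfl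
    · exact .inr .rfl
    · exact .inr ⟨1, by simp [hσ x]⟩

theorem eq_of_eqvGen_involutive (hσ : Function.Involutive σ) (hτ : Function.Involutive τ)
    {r : α → α → Prop} (hr : ∀ x y, r x y → y = x ∨ y = σ x ∨ y = τ x)
    (hv : τ v = v) (hy : τ y = y) (hz : τ z = z)
    (hvy : Relation.EqvGen r v y) (hvz : Relation.EqvGen r v z) (hyv : y ≠ v) (hzv : z ≠ v) :
    y = z := by
  have hσv : (τ * σ).symm v = σ v := by
    rw [Equiv.symm_apply_eq, mul_apply, hσ v, hv]
  have hcycle {w : α} (hw : Relation.EqvGen r v w) : SameCycle (τ * σ) v w :=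
    (sameCycle_of_eqvGen_involutive hσ hτ hr hw).elim id fun h => by
      rwa [← hσv, sameCycle_symm_apply_left] at h
  exact SameCycle.eq_of_conj_eq_inv_of_apply_eq_self (conj_mul_eq_inv_of_involutive_right hσ hτ)
    hv hy hz (hcycle hvy) (hcycle hvz) hyv hzv

end Equiv.Perm

namespace Setoid

variable {α β : Type*} {s : Setoid α} {x y : α}

def UniquePartner (s : Setoid α) : Prop :=
  ∀ ⦃x y z⦄, s x y → s x z → y ≠ x → z ≠ x → y = z

def partner (s : Setoid α) (x : α) : α :=
  if h : ∃ y, s x y ∧ y ≠ x then h.choose else x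

theorem rel_partner (s : Setoid α) (x : α) : s x (s.partner x) := by
  unfold partner
  split_ifs with h
  exacts [h.choose_spec.1, s.refl x]

theorem UniquePartner.eq_or_eq_partner (hs : s.UniquePartner) (h : s x y) :
    y = x ∨ y = s.partner x := by
  by_cases hyx : y = x
  · exact .inl hyx
  · have hex : ∃ y, s x y ∧ y ≠ x := ⟨y, h, hyx⟩
    refine .inr ?_
    rw [partner, dif_pos hex]
    exact hs h hex.choose_spec.1 hyx hex.choose_spec.2

theorem UniquePartner.partner_involutive (hs : s.UniquePartner) :
    Function.Involutive s.partner := fun x =>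
  (hs.eq_or_eq_partner (s.symm (s.rel_partner x))).elim (fun h => by rw [← h, ← h]) Eq.symm

theorem UniquePartner.comap {s : Setoid β} (hs : s.UniquePartner) {f : α → β}
    (hf : Function.Injective f) : (s.comap f).UniquePartner :=
  fun _ _ _ hxy hxz hyx hzx => hf (hs hxy hxz (hf.ne hyx) (hf.ne hzx))

theorem forall_card_filter_le_two_iff [Fintype α] [DecidableRel s.r] :
    (∀ x, (Finset.univ.filter (s.r x)).card ≤ 2) ↔ s.UniquePartner := by
  constructor
  · intro h x y z hxy hxz hyx hzx
    by_contra hyz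
    have : 2 < (Finset.univ.filter (s.r x)).card :=
      Finset.two_lt_card.2 ⟨x, by simp, y, by simpa using hxy, z,
        by simpa using hxz, Ne.symm hyx, Ne.symm hzx, hyz⟩
    exact (h x).not_gt this
  · intro hs x
    calc (Finset.univ.filter (s.r x)).card ≤ ({x, s.partner x} : Finset α).card :=
          Finset.card_le_card fun y hy => by
            simpa using hs.eq_or_eq_partner (Finset.mem_filter.1 hy).2
      _ ≤ 2 := Finset.card_le_two

end Setoid

namespace TCP

variable {p q : TCP}

theorem forall_isBlock_card_le_two_iff (p : TCP) :
    (∀ B : Finset p.Point, p.IsBlock B → B.card ≤ 2) ↔ p.rel.UniquePartner := by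
  rw [← Setoid.forall_card_filter_le_two_iff]
  exact ⟨fun h x => h _ ⟨x, rfl⟩, fun h _ ⟨x, hx⟩ => hx ▸ h x⟩

theorem uniquePartner_of_size_le_two (h : p.size ≤ 2) : p.rel.UniquePartner := by
  intro x y z _ _ hyx hzx
  by_contra hyz
  have := Fintype.two_lt_card_iff.2 ⟨x, y, z, Ne.symm hyx, Ne.symm hzx, hyz⟩
  simp only [Fintype.card_sum, Fintype.card_fin] at this
  exact (h.trans_lt this).false

theorem uniquePartner_sumSetoid {α β : Type*} {s : Setoid α} {t : Setoid β}
    (hs : s.UniquePartner) (ht : t.UniquePartner) : (sumSetoid s t).UniquePartner := by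
  rintro (x | x) (y | y) (z | z) hxy hxz hyx hzx <;>
    first
    | exact (hxy : False).elim
    | exact (hxz : False).elim
    | exact congrArg Sum.inl (hs hxy hxz (by simpa using hyx) (by simpa using hzx))
    | exact congrArg Sum.inr (ht hxy hxz (by simpa using hyx) (by simpa using hzx))

theorem ptmap_injective (p q : TCP) : Function.Injective (ptmap p q) := by
  rintro (j | j) (k | k) h <;>
    obtain ⟨j | j, rfl⟩ := finSumFinEquiv.surjective j <;>
    obtain ⟨k | k, rfl⟩ := finSumFinEquiv.surjective k <;>
    simp_all [ptmap]

theorem uniquePartner_tensor (hp : p.rel.UniquePartner) (hq : q.rel.UniquePartner) :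
    (p.tensor q).rel.UniquePartner :=
  (uniquePartner_sumSetoid hp hq).comap (ptmap_injective p q)

theorem uniquePartner_invol (hp : p.rel.UniquePartner) : p.invol.rel.UniquePartner :=
  hp.comap Sum.swap_leftInverse.injective

def middleSwap (h : p.upper = q.lower) : q.Point ⊕ p.Point → q.Point ⊕ p.Point
  | .inl (.inl j) => .inl (.inl j)
  | .inl (.inr i) => .inr (.inl (Fin.cast h.symm i))
  | .inr (.inl j) => .inl (.inr (Fin.cast h j))
  | .inr (.inr i) => .inr (.inr i)

theorem middleSwap_involutive (h : p.upper = q.lower) : Function.Involutive (middleSwap h) := by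
  rintro ((j | i) | (j | i)) <;> rfl

theorem eq_or_eq_of_compRel (hp : p.rel.UniquePartner) (hq : q.rel.UniquePartner)
    (h : p.upper = q.lower) {x y : q.Point ⊕ p.Point} (hxy : compRel p q h x y) :
    y = x ∨ y = Sum.map q.rel.partner p.rel.partner x ∨ y = middleSwap h x := by
  rcases hxy with ⟨a, b, rfl, rfl, hab⟩ | ⟨a, b, rfl, rfl, hab⟩ | ⟨j, rfl, rfl⟩ | ⟨j, rfl, rfl⟩
  · rcases hq.eq_or_eq_partner hab with rfl | rfl <;> simp
  · rcases hp.eq_or_eq_partner hab with rfl | rfl <;> simp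
  · exact .inr (.inr rfl)
  · exact .inr (.inr rfl)

theorem comp_rel_iff (h : Composable p q) (x y : Fin q.upper ⊕ Fin p.lower) :
    (comp p q h).rel x y ↔
      Relation.EqvGen (compRel p q h.len)
        (Sum.map Sum.inl Sum.inr x) (Sum.map Sum.inl Sum.inr y) := by
  rcases x with x | x <;> rcases y with y | y <;> rfl

theorem uniquePartner_comp (hp : p.rel.UniquePartner) (hq : q.rel.UniquePartner)
    (h : Composable p q) : (comp p q h).rel.UniquePartner := by
  have hpartner : Function.Involutive (Sum.map q.rel.partner p.rel.partner) := by
    rintro (a | a)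
    · exact congrArg Sum.inl (hq.partner_involutive a)
    · exact congrArg Sum.inr (hp.partner_involutive a)
  let ι : Fin q.upper ⊕ Fin p.lower → q.Point ⊕ p.Point := Sum.map Sum.inl Sum.inr
  have hι : Function.Injective ι := Sum.map_injective.2 ⟨Sum.inl_injective, Sum.inr_injective⟩
  have hfix (w) : middleSwap h.len (ι w) = ι w := by rcases w with j | i <;> rfl
  intro x y z hxy hxz hyx hzx
  exact hι (Equiv.Perm.eq_of_eqvGen_involutive (σ := hpartner.toPerm _)
    (τ := (middleSwap_involutive h.len).toPerm _) (Function.Involutive.toPerm_involutive _)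
    (Function.Involutive.toPerm_involutive _) (fun _ _ => eq_or_eq_of_compRel hp hq h.len)
    (hfix x) (hfix y) (hfix z) ((comp_rel_iff h x y).1 hxy) ((comp_rel_iff h x z).1 hxz)
    (hι.ne hyx) (hι.ne hzx))

end TCP

/-- partitions all of whose blocks have at most two legs form a category. -/
theorem stmt9 :
    TCP.IsCategory {p : TCP | ∀ B : Finset p.Point, p.IsBlock B → B.card ≤ 2} := by
  simp only [TCP.IsCategory, Set.mem_ofPred_eq, TCP.forall_isBlock_card_le_two_iff]
  refine ⟨?_, ?_, ?_, ?_, ?_, fun _ _ => TCP.uniquePartner_tensor,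
    fun _ => TCP.uniquePartner_invol, fun _ _ h hp hq => TCP.uniquePartner_comp hp hq h⟩ <;>
    exact TCP.uniquePartner_of_size_le_two (by decide)
end
end

section
/- The set of all two-colored pair partitions all of whose blocks are neutral (each block has color sum 0) is a category of two-colored partitions. -/
noncomputable section
attribute [local instance] Classical.propDecidable

/-! Pair partitions with neutral blocks are closed under the category operations.
Tensor products and the involution transport blocks along embeddings of point sets that
preserve, respectively negate, all signs.

For a composition of `p` and `q`, let `σ` send every point of `q` or `p` to its partner and
let `τ` exchange the two copies of the middle row, fixing exactly the outer points. The block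
of an outer point `u` is the orbit of `u` under `τσ`, and `τ (τσ)^i u = (τσ)^(-i) u`, so the
outer points of this orbit are `u` and `(τσ)^(m/2) u`, where `m` is the period of `u`.
The sign sum over the outer points vanishes: `σ` pairs the whole orbit into points of opposite
signs, and `τ` does the same on its middle points. -/

open Finset

namespace Equiv.Perm

variable {X : Type*} {σ τ : Perm X} {u x y : X}

theorem inv_mul_eq_mul_of_involutive (hσ : Function.Involutive σ) (hτ : Function.Involutive τ) :
    (τ * σ)⁻¹ = σ * τ :=
  inv_eq_of_mul_eq_one_right <| ext fun x => by simp only [mul_apply, hσ (τ x), hτ x, one_apply]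

theorem zpow_mul_apply_of_fixed (hσ : Function.Involutive σ) (hτ : Function.Involutive τ)
    (hu : τ u = u) (i : ℤ) : τ (((τ * σ) ^ i) u) = ((τ * σ) ^ (-i)) u := by
  have hconj : SemiconjBy τ (τ * σ) (τ * σ)⁻¹ := by
    rw [inv_mul_eq_mul_of_involutive hσ hτ]
    ext x
    simp only [mul_apply, hτ (σ x), hτ x]
  have := congrArg (· u) (hconj.zpow_right i).eq
  simpa only [mul_apply, hu, inv_zpow'] using this

theorem SameCycle.apply_right_of_fixed (hσ : Function.Involutive σ)
    (hτ : Function.Involutive τ) (hu : τ u = u) (hx : (τ * σ).SameCycle u x) :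
    (τ * σ).SameCycle u (τ x) ∧ (τ * σ).SameCycle u (σ x) := by
  have hτx : ∀ y, (τ * σ).SameCycle u y → (τ * σ).SameCycle u (τ y) := by
    rintro _ ⟨i, rfl⟩
    exact ⟨-i, (zpow_mul_apply_of_fixed hσ hτ hu i).symm⟩
  refine ⟨hτx x hx, ?_⟩
  have hσx : σ x = τ ((τ * σ) x) := by rw [mul_apply, hτ]
  exact hσx ▸ hτx _ (sameCycle_apply_right.2 hx)

theorem eqvGen_iff_sameCycle [Finite X] (hσ : Function.Involutive σ)
    (hτ : Function.Involutive τ) {r : X → X → Prop}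
    (hr : ∀ a b, r a b → b = a ∨ b = σ a ∨ b = τ a)
    (hrσ : ∀ a, r a (σ a)) (hrτ : ∀ a, τ a ≠ a → r a (τ a)) (hu : τ u = u) :
    Relation.EqvGen r u y ↔ (τ * σ).SameCycle u y := by
  constructor
  · have hsame : ∀ a b, r a b → ((τ * σ).SameCycle u a ↔ (τ * σ).SameCycle u b) := by
      intro a b hab
      have hstep := fun c => SameCycle.apply_right_of_fixed (x := c) hσ hτ hu
      rcases hr a b hab with rfl | rfl | rfl
      · rfl
      · exact ⟨fun h => (hstep _ h).2, fun h => hσ a ▸ (hstep _ h).2⟩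
      · exact ⟨fun h => (hstep _ h).1, fun h => hτ a ▸ (hstep _ h).1⟩
    intro h
    have hequiv : Equivalence fun a b => ((τ * σ).SameCycle u a ↔ (τ * σ).SameCycle u b) :=
      ⟨fun _ => Iff.rfl, Iff.symm, Iff.trans⟩
    exact (hequiv.eqvGen_iff.1 (Relation.EqvGen.mono hsame _ _ h)).1 (SameCycle.refl _ _)
  · intro h
    obtain ⟨n, rfl⟩ := h.exists_nat_pow_eq
    clear h
    induction n with
    | zero => exact Relation.EqvGen.refl _
    | succ n ih =>
      refine ih.trans _ _ _ ((Relation.EqvGen.rel _ _ (hrσ _)).trans _ _ _ ?_)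
      rw [pow_succ', mul_apply, mul_apply]
      by_cases hfix : τ (σ (((τ * σ) ^ n) u)) = σ (((τ * σ) ^ n) u)
      · rw [hfix]; exact Relation.EqvGen.refl _
      · exact Relation.EqvGen.rel _ _ (hrτ _ hfix)

theorem SameCycle.eq_or_eq_of_fixed [Finite X] (hσ : Function.Involutive σ)
    (hτ : Function.Involutive τ) (hu : τ u = u) (hx : (τ * σ).SameCycle u x)
    (hxτ : τ x = x) :
    x = u ∨ x = ((τ * σ) ^ (Function.minimalPeriod (τ * σ) u / 2)) u := by
  set F := τ * σ
  set m := Function.minimalPeriod F u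
  have hm : 0 < m := Function.IsPeriodicPt.minimalPeriod_pos (orderOf_pos F) <| by
    rw [Function.IsPeriodicPt, Function.IsFixedPt, ← coe_pow, pow_orderOf_eq_one, one_apply]
  obtain ⟨n, rfl⟩ := hx.exists_nat_pow_eq
  rw [coe_pow, ← Function.iterate_mod_minimalPeriod_eq, ← coe_pow] at hxτ ⊢
  set a := n % m
  have ha : a < m := Nat.mod_lt n hm
  have hdvd : m ∣ a + a := by
    refine Function.IsPeriodicPt.minimalPeriod_dvd ?_
    have h := zpow_mul_apply_of_fixed hσ hτ hu a
    rw [zpow_natCast, hxτ, zpow_neg, zpow_natCast, eq_comm, inv_eq_iff_eq] at h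
    rw [Function.IsPeriodicPt, Function.IsFixedPt, ← coe_pow, pow_add, mul_apply, ← h]
  obtain ⟨k, hk⟩ := hdvd
  have hk2 : k < 2 := by by_contra; nlinarith
  interval_cases k
  · left; rw [show a = 0 by omega, pow_zero, one_apply]
  · right; rw [show m / 2 = a by omega]

theorem card_le_two_of_forall_mem_sameCycle_fixed [Finite X] (hσ : Function.Involutive σ)
    (hτ : Function.Involutive τ) (hu : τ u = u) {S : Finset X}
    (hS : ∀ x ∈ S, (τ * σ).SameCycle u x ∧ τ x = x) : #S ≤ 2 := by
  calc #S ≤ #{u, ((τ * σ) ^ (Function.minimalPeriod (τ * σ) u / 2)) u} := by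
        refine card_le_card fun x hx => ?_
        simpa using (hS x hx).1.eq_or_eq_of_fixed hσ hτ hu (hS x hx).2
    _ ≤ 2 := card_le_two

theorem sum_eq_zero_of_mem_iff_sameCycle_fixed [Fintype X] (hσ : Function.Involutive σ)
    (hτ : Function.Involutive τ) (hu : τ u = u) {S : Finset X}
    (hS : ∀ x, x ∈ S ↔ (τ * σ).SameCycle u x ∧ τ x = x) (s : X → ℤ)
    (hsσ : ∀ x, s (σ x) = -s x) (hsτ : ∀ x, τ x ≠ x → s (τ x) = -s x) :
    ∑ x ∈ S, s x = 0 := by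
  have hcycle := fun x => SameCycle.apply_right_of_fixed (x := x) hσ hτ hu
  have hσsum : ∑ x ∈ {x | (τ * σ).SameCycle u x}, s x = 0 := by
    refine sum_involution (fun x _ => σ x) (fun x _ => by rw [hsσ]; ring)
      (fun x _ hx hfix => hx ?_) (fun x hx => ?_) (fun x _ => hσ x)
    · have := hsσ x; rw [hfix] at this; omega
    · simpa using (hcycle x (by simpa using hx)).2
  have hτsum : ∑ x ∈ {x | (τ * σ).SameCycle u x ∧ τ x ≠ x}, s x = 0 := by
    refine sum_involution (fun x _ => τ x)
      (fun x hx => by rw [hsτ x (mem_filter.1 hx).2.2]; ring)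
      (fun x hx _ => (mem_filter.1 hx).2.2) (fun x hx => ?_) (fun x _ => hτ x)
    obtain ⟨hxu, hxτ⟩ := (mem_filter.1 hx).2
    exact mem_filter.2 ⟨mem_univ _, (hcycle x hxu).1, by rw [hτ x]; exact Ne.symm hxτ⟩
  have hsplit :=
    sum_filter_add_sum_filter_not {x | (τ * σ).SameCycle u x} (fun x => τ x = x) s
  rw [filter_filter, filter_filter, hσsum, hτsum] at hsplit
  obtain rfl : S = ({x | (τ * σ).SameCycle u x ∧ τ x = x} : Finset X) := by ext x; simp [hS]
  linarith

end Equiv.Perm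

namespace TCP

variable {p q : TCP}

def IsNeutralPair (p : TCP) : Prop :=
  ∀ x, #(p.blockOf x) = 2 ∧ p.csum (p.blockOf x) = 0

theorem mem_blockOf {x y : p.Point} : y ∈ p.blockOf x ↔ p.rel.r x y := by
  simp [blockOf]

theorem self_mem_blockOf (x : p.Point) : x ∈ p.blockOf x :=
  mem_blockOf.2 (p.rel.refl x)

theorem forall_isBlock_iff_isNeutralPair :
    (∀ B, p.IsBlock B → #B = 2 ∧ p.csum B = 0) ↔ p.IsNeutralPair :=
  ⟨fun h x => h _ ⟨x, rfl⟩, by rintro h B ⟨x, rfl⟩; exact h x⟩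

theorem blockOf_top (h : p.rel = ⊤) (x : p.Point) : p.blockOf x = univ := by
  ext y
  rw [mem_blockOf, h]
  simp

theorem IsNeutralPair.blockOf_embedding {P Q : TCP} (hP : P.IsNeutralPair) (f : P.Point ↪ Q.Point)
    (hrel : ∀ a y, Q.rel.r (f a) y ↔ ∃ b, P.rel.r a b ∧ f b = y) (c : ℤ)
    (hsgn : ∀ a, Q.sgn (f a) = c * P.sgn a) (a : P.Point) :
    #(Q.blockOf (f a)) = 2 ∧ Q.csum (Q.blockOf (f a)) = 0 := by
  have hmap : Q.blockOf (f a) = (P.blockOf a).map f := by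
    ext y
    simp only [mem_blockOf, hrel, mem_map]
  rw [hmap, card_map, csum, sum_map]
  simp only [hsgn, ← mul_sum]
  exact ⟨(hP a).1, by rw [← csum, (hP a).2, mul_zero]⟩

theorem emptyP_isNeutralPair : emptyP.IsNeutralPair := by
  rintro (j | i)
  · exact j.elim0
  · exact i.elim0

theorem idPart_isNeutralPair (c : Bool) : (idPart c).IsNeutralPair := fun x => by
  rw [blockOf_top rfl]
  exact ⟨rfl, by cases c <;> rfl⟩

theorem lpair_isNeutralPair (c : Bool) : (lpair c (!c)).IsNeutralPair := fun x => by
  rw [blockOf_top rfl]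
  exact ⟨rfl, by cases c <;> rfl⟩

theorem sgn_ne_zero (x : p.Point) : p.sgn x ≠ 0 := by
  unfold sgn; split <;> simp

namespace IsNeutralPair

theorem exists_blockOf_eq_pair (hp : p.IsNeutralPair) (x : p.Point) :
    ∃ y, y ≠ x ∧ p.blockOf x = {x, y} := by
  obtain ⟨a, b, hab, hpair⟩ := card_eq_two.1 (hp x).1
  have hx := self_mem_blockOf x
  rw [hpair, mem_insert, mem_singleton] at hx
  rcases hx with rfl | rfl
  · exact ⟨b, hab.symm, hpair⟩
  · exact ⟨a, hab, by rw [hpair, pair_comm]⟩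

def partner (hp : p.IsNeutralPair) (x : p.Point) : p.Point := (hp.exists_blockOf_eq_pair x).choose

theorem partner_ne (hp : p.IsNeutralPair) (x : p.Point) : hp.partner x ≠ x :=
  (hp.exists_blockOf_eq_pair x).choose_spec.1

theorem blockOf_eq_pair (hp : p.IsNeutralPair) (x : p.Point) : p.blockOf x = {x, hp.partner x} :=
  (hp.exists_blockOf_eq_pair x).choose_spec.2

theorem rel_iff (hp : p.IsNeutralPair) {x y : p.Point} :
    p.rel.r x y ↔ y = x ∨ y = hp.partner x := by
  rw [← mem_blockOf, hp.blockOf_eq_pair, mem_insert, mem_singleton]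

theorem partner_involutive (hp : p.IsNeutralPair) : Function.Involutive hp.partner := fun x => by
  have hx : p.rel.r (hp.partner x) x := p.rel.symm (hp.rel_iff.2 (.inr rfl))
  exact ((hp.rel_iff.1 hx).resolve_left (hp.partner_ne x).symm).symm

theorem sgn_partner (hp : p.IsNeutralPair) (x : p.Point) : p.sgn (hp.partner x) = -p.sgn x := by
  have h := (hp x).2
  rw [hp.blockOf_eq_pair, csum, sum_pair (hp.partner_ne x).symm] at h
  linarith

end IsNeutralPair

theorem card_blockOf_eq_two {x : p.Point} (hcard : #(p.blockOf x) ≤ 2)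
    (hsum : p.csum (p.blockOf x) = 0) : #(p.blockOf x) = 2 := by
  have hne : #(p.blockOf x) ≠ 1 := fun h1 => by
    obtain ⟨y, hy⟩ := card_eq_one.1 h1
    rw [hy, csum, sum_singleton] at hsum
    exact sgn_ne_zero y hsum
  have hpos : 0 < #(p.blockOf x) := card_pos.2 ⟨x, self_mem_blockOf x⟩
  omega

theorem ptmap_tinl (a : p.Point) : ptmap p q (tinl p q a) = .inl a := by
  rcases a with j | i <;> simp [ptmap, tinl]

theorem ptmap_tinr (b : q.Point) : ptmap p q (tinr p q b) = .inr b := by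
  rcases b with j | i <;> simp [ptmap, tinr]

theorem exists_tinl_or_tinr (x : (p.tensor q).Point) :
    (∃ a, tinl p q a = x) ∨ ∃ b, tinr p q b = x := by
  rcases x with j | i
  · cases j using Fin.addCases with
    | left j => exact .inl ⟨.inl j, rfl⟩
    | right j => exact .inr ⟨.inl j, rfl⟩
  · cases i using Fin.addCases with
    | left i => exact .inl ⟨.inr i, rfl⟩
    | right i => exact .inr ⟨.inr i, rfl⟩

theorem tinl_injective : Function.Injective (tinl p q) := fun a b h =>
  Sum.inl_injective (by rw [← ptmap_tinl (q := q) a, h, ptmap_tinl])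

theorem tinr_injective : Function.Injective (tinr p q) := fun a b h =>
  Sum.inr_injective (by rw [← ptmap_tinr (p := p) a, h, ptmap_tinr])

theorem tinl_ne_tinr (a : p.Point) (b : q.Point) : tinl p q a ≠ tinr p q b := fun h =>
  Sum.inl_ne_inr (by rw [← ptmap_tinl a, h, ptmap_tinr])

theorem ncolor_tinl (a : p.Point) : (p.tensor q).ncolor (tinl p q a) = p.ncolor a := by
  rcases a with j | i <;> simp [ncolor, tinl, tensor]

theorem ncolor_tinr (b : q.Point) : (p.tensor q).ncolor (tinr p q b) = q.ncolor b := by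
  rcases b with j | i <;> simp [ncolor, tinr, tensor]

theorem sgn_tinl (a : p.Point) : (p.tensor q).sgn (tinl p q a) = p.sgn a := by
  rw [sgn, sgn, ncolor_tinl]

theorem sgn_tinr (b : q.Point) : (p.tensor q).sgn (tinr p q b) = q.sgn b := by
  rw [sgn, sgn, ncolor_tinr]

theorem rel_tinl_iff (a : p.Point) (y : (p.tensor q).Point) :
    (p.tensor q).rel.r (tinl p q a) y ↔ ∃ b, p.rel.r a b ∧ tinl p q b = y := by
  change sumRel _ _ (ptmap p q (tinl p q a)) (ptmap p q y) ↔ _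
  rcases exists_tinl_or_tinr y with ⟨b, rfl⟩ | ⟨b, rfl⟩
  · rw [ptmap_tinl, ptmap_tinl]
    exact ⟨fun h => ⟨b, h, rfl⟩, fun ⟨b', h, hb⟩ => tinl_injective hb ▸ h⟩
  · rw [ptmap_tinl, ptmap_tinr]
    exact ⟨False.elim, fun ⟨b', _, hb⟩ => tinl_ne_tinr b' b hb⟩

theorem rel_tinr_iff (a : q.Point) (y : (p.tensor q).Point) :
    (p.tensor q).rel.r (tinr p q a) y ↔ ∃ b, q.rel.r a b ∧ tinr p q b = y := by
  change sumRel _ _ (ptmap p q (tinr p q a)) (ptmap p q y) ↔ _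
  rcases exists_tinl_or_tinr y with ⟨b, rfl⟩ | ⟨b, rfl⟩
  · rw [ptmap_tinr, ptmap_tinl]
    exact ⟨False.elim, fun ⟨b', _, hb⟩ => tinl_ne_tinr b b' hb.symm⟩
  · rw [ptmap_tinr, ptmap_tinr]
    exact ⟨fun h => ⟨b, h, rfl⟩, fun ⟨b', h, hb⟩ => tinr_injective hb ▸ h⟩

theorem IsNeutralPair.tensor (hp : p.IsNeutralPair) (hq : q.IsNeutralPair) :
    (p.tensor q).IsNeutralPair := by
  intro x
  rcases exists_tinl_or_tinr x with ⟨a, rfl⟩ | ⟨b, rfl⟩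
  · exact hp.blockOf_embedding ⟨_, tinl_injective⟩ rel_tinl_iff 1
      (fun a => (sgn_tinl a).trans (one_mul _).symm) a
  · exact hq.blockOf_embedding ⟨_, tinr_injective⟩ rel_tinr_iff 1
      (fun b => (sgn_tinr b).trans (one_mul _).symm) b

theorem sgn_invol_swap (a : p.Point) : p.invol.sgn a.swap = -p.sgn a := by
  rcases a with j | i
  · cases h : p.upColor j <;> simp [sgn, ncolor, invol, h]
  · cases h : p.loColor i <;> simp [sgn, ncolor, invol, h]

theorem IsNeutralPair.invol (hp : p.IsNeutralPair) : p.invol.IsNeutralPair := by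
  intro x
  rw [← Sum.swap_swap x]
  refine hp.blockOf_embedding (Q := p.invol) ⟨Sum.swap, Sum.swap_leftInverse.injective⟩
    (fun a y => ?_) (-1)
    (fun a => (sgn_invol_swap a).trans (neg_one_mul _).symm) x.swap
  change p.rel.r a.swap.swap y.swap ↔ _
  rw [Sum.swap_swap]
  exact ⟨fun h => ⟨y.swap, h, Sum.swap_swap y⟩,
    by rintro ⟨b, h, rfl⟩; exact (Sum.swap_swap b).symm ▸ h⟩

section Composition

variable (h : Composable p q)

def compOuter : (p.comp q h).Point ↪ q.Point ⊕ p.Point :=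
  .sumMap .inl .inr

def midSwap : Equiv.Perm (q.Point ⊕ p.Point) :=
  Function.Involutive.toPerm
    (fun x => match x with
      | .inl (.inr j) => .inr (.inl (Fin.cast h.len.symm j))
      | .inr (.inl j) => .inl (.inr (Fin.cast h.len j))
      | x => x)
    (by rintro ((a | j) | (j | b)) <;> rfl)

theorem midSwap_involutive : Function.Involutive (midSwap h) :=
  Function.Involutive.toPerm_involutive _

theorem midSwap_eq_self_iff {z : q.Point ⊕ p.Point} :
    midSwap h z = z ↔ ∃ x, compOuter h x = z := by
  rcases z with (a | j) | (j | b) <;>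
    simp [midSwap, compOuter, Function.Involutive.toPerm, Function.Embedding.sumMap,
      Function.Embedding.inl, Function.Embedding.inr] <;>
    exact ⟨_, rfl⟩

theorem comp_rel_iff_s11 (x y : (p.comp q h).Point) :
    (p.comp q h).rel.r x y ↔
      Relation.EqvGen (compRel p q h.len) (compOuter h x) (compOuter h y) := by
  rcases x with j | i <;> rcases y with j' | i' <;> exact Iff.rfl

theorem sgn_comp (x : (p.comp q h).Point) :
    (p.comp q h).sgn x = Sum.elim q.sgn p.sgn (compOuter h x) := by
  rcases x with j | i <;> rfl

theorem sgn_midSwap {z : q.Point ⊕ p.Point} (hz : midSwap h z ≠ z) :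
    Sum.elim q.sgn p.sgn (midSwap h z) = -Sum.elim q.sgn p.sgn z := by
  rcases z with (a | j) | (j | b)
  · exact absurd rfl hz
  · change p.sgn (.inl (Fin.cast h.len.symm j)) = -q.sgn (.inr j)
    have hcol : p.upColor (Fin.cast h.len.symm j) = q.loColor j := h.col _
    cases hc : q.loColor j <;> simp [sgn, ncolor, hcol, hc]
  · change q.sgn (.inr (Fin.cast h.len j)) = -p.sgn (.inl j)
    cases hc : p.upColor j <;> simp [sgn, ncolor, ← h.col j, hc]
  · exact absurd rfl hz

variable (hp : p.IsNeutralPair) (hq : q.IsNeutralPair)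

def compPartner : Equiv.Perm (q.Point ⊕ p.Point) :=
  .sumCongr (hq.partner_involutive.toPerm _) (hp.partner_involutive.toPerm _)

theorem compPartner_involutive : Function.Involutive (compPartner hp hq) := by
  rintro (a | b) <;>
    simp [compPartner, Function.Involutive.toPerm, hp.partner_involutive _,
      hq.partner_involutive _]

theorem sgn_compPartner (z : q.Point ⊕ p.Point) :
    Sum.elim q.sgn p.sgn (compPartner hp hq z) = -Sum.elim q.sgn p.sgn z := by
  rcases z with a | b <;>
    simp [compPartner, Function.Involutive.toPerm, hp.sgn_partner, hq.sgn_partner]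

theorem compRel_compPartner (z : q.Point ⊕ p.Point) :
    compRel p q h.len z (compPartner hp hq z) := by
  rcases z with a | b
  · exact .inl ⟨a, _, rfl, rfl, hq.rel_iff.2 (.inr rfl)⟩
  · exact .inr (.inl ⟨b, _, rfl, rfl, hp.rel_iff.2 (.inr rfl)⟩)

theorem compRel_midSwap {z : q.Point ⊕ p.Point} (hz : midSwap h z ≠ z) :
    compRel p q h.len z (midSwap h z) := by
  rcases z with (a | j) | (j | b)
  · exact absurd rfl hz
  · exact .inr (.inr (.inl ⟨Fin.cast h.len.symm j, rfl, rfl⟩))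
  · exact .inr (.inr (.inr ⟨j, rfl, rfl⟩))
  · exact absurd rfl hz

theorem eq_or_eq_of_compRel_s11 {z w : q.Point ⊕ p.Point} (hzw : compRel p q h.len z w) :
    w = z ∨ w = compPartner hp hq z ∨ w = midSwap h z := by
  rcases hzw with ⟨a, b, rfl, rfl, hab⟩ | ⟨a, b, rfl, rfl, hab⟩ | ⟨j, rfl, rfl⟩ |
    ⟨j, rfl, rfl⟩
  · rcases hq.rel_iff.1 hab with rfl | rfl
    · exact .inl rfl
    · exact .inr (.inl rfl)
  · rcases hp.rel_iff.1 hab with rfl | rfl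
    · exact .inl rfl
    · exact .inr (.inl rfl)
  · exact .inr (.inr rfl)
  · exact .inr (.inr rfl)

theorem mem_map_blockOf_comp_iff (x : (p.comp q h).Point) (z : q.Point ⊕ p.Point) :
    z ∈ ((p.comp q h).blockOf x).map (compOuter h) ↔
      (midSwap h * compPartner hp hq).SameCycle (compOuter h x) z ∧ midSwap h z = z := by
  have hcycle := Equiv.Perm.eqvGen_iff_sameCycle (y := z) (compPartner_involutive hp hq)
    (midSwap_involutive h) (fun _ _ => eq_or_eq_of_compRel_s11 h hp hq) (compRel_compPartner h hp hq)
    (fun _ => compRel_midSwap h) ((midSwap_eq_self_iff h).2 ⟨x, rfl⟩)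
  rw [mem_map, midSwap_eq_self_iff]
  constructor
  · rintro ⟨y, hy, rfl⟩
    exact ⟨hcycle.1 ((comp_rel_iff_s11 h x y).1 (mem_blockOf.1 hy)), y, rfl⟩
  · rintro ⟨hz, y, rfl⟩
    exact ⟨y, mem_blockOf.2 ((comp_rel_iff_s11 h x y).2 (hcycle.2 hz)), rfl⟩

end Composition

theorem IsNeutralPair.comp (hp : p.IsNeutralPair) (hq : q.IsNeutralPair) (h : Composable p q) :
    (p.comp q h).IsNeutralPair := by
  intro x
  have hu : midSwap h (compOuter h x) = compOuter h x :=
    (midSwap_eq_self_iff h).2 ⟨x, rfl⟩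
  have hsum : (p.comp q h).csum ((p.comp q h).blockOf x) = 0 := by
    rw [csum, sum_congr rfl fun y _ => sgn_comp h y, ← sum_map _ (compOuter h)]
    exact Equiv.Perm.sum_eq_zero_of_mem_iff_sameCycle_fixed (compPartner_involutive hp hq)
      (midSwap_involutive h) hu (mem_map_blockOf_comp_iff h hp hq x) _
      (sgn_compPartner hp hq) (fun _ => sgn_midSwap h)
  have hcard : #((p.comp q h).blockOf x) ≤ 2 := by
    rw [← card_map (compOuter h)]
    exact Equiv.Perm.card_le_two_of_forall_mem_sameCycle_fixed (compPartner_involutive hp hq)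
      (midSwap_involutive h) hu fun z hz => (mem_map_blockOf_comp_iff h hp hq x z).1 hz
  exact ⟨card_blockOf_eq_two hcard hsum, hsum⟩

end TCP

/-- pair partitions with neutral blocks form a category. -/
theorem stmt11 :
    TCP.IsCategory {p : TCP | ∀ B : Finset p.Point, p.IsBlock B →
      B.card = 2 ∧ p.csum B = 0} := by
  rw [show {p : TCP | ∀ B : Finset p.Point, p.IsBlock B → B.card = 2 ∧ p.csum B = 0} =
    {p | p.IsNeutralPair} from Set.ext fun _ => TCP.forall_isBlock_iff_isNeutralPair]
  exact ⟨TCP.emptyP_isNeutralPair, TCP.idPart_isNeutralPair true, TCP.idPart_isNeutralPair false,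
    TCP.lpair_isNeutralPair true, TCP.lpair_isNeutralPair false, fun _ _ hp hq => hp.tensor hq,
    fun _ hp => hp.invol, fun _ _ h hp hq => hp.comp hq h⟩
end
end

section
/- Let m ∈ {0} ∪ ℕ and Q = (ℕ, ℤ, mℤ, mℤ, mℤ, ℤ). For a two-colored partition p, the condition Z({p}) ≤ Q (componentwise set inclusion) holds if and only if for every block B of p and any two legs α, β ∈ B one has δ_p(α,β) ∈ mℤ. -/
noncomputable section
attribute [local instance] Classical.propDecidable

namespace TCPAux
open TCP

variable (p : TCP)

lemma pos_lt (x : p.Point) : p.pos x < p.size := by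
  rcases x with j | i
  · have := j.isLt; simp only [TCP.pos, TCP.size]; omega
  · have := i.isLt; simp only [TCP.pos, TCP.size]; omega

lemma pos_inj {x y : p.Point} (h : p.pos x = p.pos y) : x = y := by
  rcases x with j | i <;> rcases y with j' | i'
  · have := j.isLt; have := j'.isLt
    simp only [TCP.pos] at h
    exact congrArg Sum.inl (Fin.ext (by omega))
  · have := i'.isLt; simp only [TCP.pos] at h; omega
  · have := i.isLt; simp only [TCP.pos] at h; omega
  · exact congrArg Sum.inr (Fin.ext (by simpa [TCP.pos] using h))

lemma relpos_explicit (x y : p.Point) :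
    p.relpos x y = if p.pos x ≤ p.pos y then p.pos y - p.pos x
      else p.size + p.pos y - p.pos x := by
  have hx := pos_lt p x; have hy := pos_lt p y
  unfold TCP.relpos
  split_ifs with h
  · have e : p.size + p.pos y - p.pos x = p.size + (p.pos y - p.pos x) := by omega
    rw [e, Nat.add_mod_left, Nat.mod_eq_of_lt (by omega)]
  · exact Nat.mod_eq_of_lt (by omega)

lemma relpos_lt (x y : p.Point) : p.relpos x y < p.size := by
  have hx := pos_lt p x; have hy := pos_lt p y
  rw [relpos_explicit]
  split_ifs <;> omega

lemma relpos_self (x : p.Point) : p.relpos x x = 0 := by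
  rw [relpos_explicit]; simp

lemma relpos_right_inj {x w y : p.Point} (h : p.relpos x w = p.relpos x y) : w = y := by
  have h1 := pos_lt p x; have h2 := pos_lt p w; have h3 := pos_lt p y
  rw [relpos_explicit, relpos_explicit] at h
  apply pos_inj p
  split_ifs at h <;> omega

lemma relpos_rel (x y w : p.Point) :
    p.relpos y w = if p.relpos x y ≤ p.relpos x w then p.relpos x w - p.relpos x y
      else p.size + p.relpos x w - p.relpos x y := by
  have hx := pos_lt p x; have hy := pos_lt p y; have hw := pos_lt p w
  rw [relpos_explicit, relpos_explicit, relpos_explicit]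
  split_ifs <;> omega

lemma csum_Ioc_add (x y z : p.Point) :
    p.csum (p.Ioc x y) + p.csum (p.Ioc y z) =
      p.csum (p.Ioc x z) +
        (if p.size ≤ p.relpos x y + p.relpos y z then p.tsum else 0) := by
  have key : ∀ w : p.Point,
      ((if 0 < p.relpos x w ∧ p.relpos x w ≤ p.relpos x y then p.sgn w else 0) +
       (if 0 < p.relpos y w ∧ p.relpos y w ≤ p.relpos y z then p.sgn w else 0)) =
      ((if 0 < p.relpos x w ∧ p.relpos x w ≤ p.relpos x z then p.sgn w else 0) +
       (if p.size ≤ p.relpos x y + p.relpos y z then p.sgn w else 0)) := by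
    intro w
    have h1 := relpos_rel p x y w
    have h2 := relpos_rel p x y z
    have l1 := relpos_lt p x w
    have l2 := relpos_lt p x y
    have l3 := relpos_lt p x z
    have l4 := relpos_lt p y z
    have l5 := relpos_lt p y w
    generalize p.sgn w = v
    split_ifs at h1 h2 ⊢ <;> omega
  have e1 : p.csum (p.Ioc x y) =
      ∑ w, if 0 < p.relpos x w ∧ p.relpos x w ≤ p.relpos x y then p.sgn w else 0 := by
    rw [TCP.csum, TCP.Ioc, Finset.sum_filter]
  have e2 : p.csum (p.Ioc y z) =
      ∑ w, if 0 < p.relpos y w ∧ p.relpos y w ≤ p.relpos y z then p.sgn w else 0 := by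
    rw [TCP.csum, TCP.Ioc, Finset.sum_filter]
  have e3 : p.csum (p.Ioc x z) =
      ∑ w, if 0 < p.relpos x w ∧ p.relpos x w ≤ p.relpos x z then p.sgn w else 0 := by
    rw [TCP.csum, TCP.Ioc, Finset.sum_filter]
  have e4 : (if p.size ≤ p.relpos x y + p.relpos y z then p.tsum else 0)
      = ∑ w, if p.size ≤ p.relpos x y + p.relpos y z then p.sgn w else 0 := by
    split_ifs with h
    · rfl
    · simp
  rw [e1, e2, e3, e4, ← Finset.sum_add_distrib, ← Finset.sum_add_distrib]
  exact Finset.sum_congr rfl fun w _ => key w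

lemma relpos_pos {x y : p.Point} (h : x ≠ y) : 0 < p.relpos x y := by
  rcases Nat.eq_zero_or_pos (p.relpos x y) with h0 | h0
  · exact absurd (relpos_right_inj p (h0.trans (relpos_self p x).symm)) (Ne.symm h)
  · exact h0

lemma Ioc_eq_insert (x y : p.Point) (h : x ≠ y) :
    p.Ioc x y = insert y (p.Ioo x y) := by
  have hr := relpos_pos p h
  ext w
  simp only [TCP.Ioc, TCP.Ioo, Finset.mem_insert, Finset.mem_filter, Finset.mem_univ,
    true_and]
  constructor
  · rintro ⟨h1, h2⟩
    rcases Nat.lt_or_ge (p.relpos x w) (p.relpos x y) with hlt | hge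
    · exact Or.inr ⟨h1, hlt⟩
    · exact Or.inl (relpos_right_inj p (le_antisymm h2 hge))
  · rintro (rfl | ⟨h1, h2⟩)
    · exact ⟨hr, le_refl _⟩
    · exact ⟨h1, le_of_lt h2⟩

lemma csum_Ioo (x y : p.Point) (h : x ≠ y) :
    p.csum (p.Ioo x y) = p.csum (p.Ioc x y) - p.sgn y := by
  have hy : y ∉ p.Ioo x y := by simp [TCP.Ioo]
  rw [Ioc_eq_insert p x y h]
  unfold TCP.csum
  rw [Finset.sum_insert hy]
  ring

lemma cdist_eq (x y : p.Point) (h : x ≠ y) :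
    p.cdist x y = p.csum (p.Ioc x y) -
      (if p.ncolor x = p.ncolor y then 0 else p.sgn y) := by
  rw [TCP.cdist, if_neg h]
  split_ifs with hc
  · ring
  · rw [csum_Ioo p x y h]

lemma dvd_triangle {m : ℤ} (hm : m ∣ p.tsum) (x y z : p.Point)
    (h1 : m ∣ p.cdist x y) (h2 : m ∣ p.cdist y z) : m ∣ p.cdist x z := by
  by_cases hxy : x = y
  · subst hxy; exact h2
  by_cases hyz : y = z
  · subst hyz; exact h1
  by_cases hxz : x = z
  · subst hxz; rw [TCP.cdist, if_pos rfl]; exact hm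
  have e1 := cdist_eq p x y hxy
  have e2 := cdist_eq p y z hyz
  have e3 := cdist_eq p x z hxz
  have hadd := csum_Ioc_add p x y z
  have ecol : (if p.ncolor x = p.ncolor y then (0:ℤ) else p.sgn y) +
      (if p.ncolor y = p.ncolor z then (0:ℤ) else p.sgn z) -
      (if p.ncolor x = p.ncolor z then (0:ℤ) else p.sgn z) = 0 := by
    cases hbx : p.ncolor x <;> cases hby : p.ncolor y <;> cases hbz : p.ncolor z <;>
      simp [TCP.sgn, hbx, hby, hbz]
  have key : p.cdist x z = p.cdist x y + p.cdist y z -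
      (if p.size ≤ p.relpos x y + p.relpos y z then p.tsum else 0) := by
    rw [e1, e2, e3]; linarith [hadd, ecol]
  rw [key]
  refine dvd_sub (dvd_add h1 h2) ?_
  split_ifs
  · exact hm
  · exact dvd_zero m

lemma dvd_all {m : ℤ} (hm : m ∣ p.tsum)
    (hLK : ∀ B, p.IsBlock B → ∀ a ∈ B, ∀ b ∈ B, a ≠ b → p.Ioo a b ∩ B = ∅ →
      m ∣ p.cdist a b)
    (B : Finset p.Point) (hB : p.IsBlock B) (a : p.Point) (ha : a ∈ B) :
    ∀ n, ∀ b ∈ B, p.relpos a b = n → m ∣ p.cdist a b := by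
  intro n
  induction n using Nat.strong_induction_on with
  | _ n ih =>
    intro b hb hn
    by_cases hab : a = b
    · subst hab; rw [TCP.cdist, if_pos rfl]; exact hm
    have hn0 : 0 < n := hn ▸ relpos_pos p hab
    have hCne : (B.filter (fun c => p.relpos a c < n)).Nonempty :=
      ⟨a, Finset.mem_filter.mpr ⟨ha, by rw [relpos_self]; exact hn0⟩⟩
    obtain ⟨c, hcC, hcmax⟩ :=
      Finset.exists_max_image (B.filter (fun c => p.relpos a c < n))
        (fun c => p.relpos a c) hCne
    have hcB : c ∈ B := (Finset.mem_filter.mp hcC).1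
    have hcn : p.relpos a c < n := (Finset.mem_filter.mp hcC).2
    have hcb : c ≠ b := fun h => by rw [h, hn] at hcn; omega
    have hIoo : p.Ioo c b ∩ B = ∅ := by
      rw [Finset.eq_empty_iff_forall_notMem]
      intro w hw
      rw [Finset.mem_inter] at hw
      obtain ⟨hw1, hwB⟩ := hw
      rw [TCP.Ioo, Finset.mem_filter] at hw1
      obtain ⟨-, hw2, hw3⟩ := hw1
      have e1 := relpos_rel p a c w
      have e2 := relpos_rel p a c b
      have l1 := relpos_lt p a w
      have l2 := relpos_lt p a c
      have l3 := relpos_lt p a b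
      rw [hn] at e2 l3
      have hww : p.relpos a w < n ∧ p.relpos a c < p.relpos a w := by
        split_ifs at e1 e2 <;> omega
      have hmax := hcmax w (Finset.mem_filter.mpr ⟨hwB, hww.1⟩)
      omega
    have h1 : m ∣ p.cdist a c := ih (p.relpos a c) hcn c hcB rfl
    have h2 : m ∣ p.cdist c b := hLK B hB c hcB b hb hcb hIoo
    exact dvd_triangle p hm a c b h1 h2

end TCPAux


/-- Z({p}) ≤ (ℕ, ℤ, mℤ, mℤ, mℤ, ℤ) iff all color distances between
legs of the same block are multiples of m. -/
theorem stmt13 (m : ℕ) (p : TCP) :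
    TCP.Z {p} ≤
      ((Set.univ, Set.univ, {x : ℤ | (m : ℤ) ∣ x}, {x : ℤ | (m : ℤ) ∣ x},
        {x : ℤ | (m : ℤ) ∣ x}, Set.univ) : TCP.Param) ↔
    ∀ B : Finset p.Point, p.IsBlock B → ∀ a ∈ B, ∀ b ∈ B, (m : ℤ) ∣ p.cdist a b := by
  constructor
  · intro h B hB a ha b hb
    simp only [TCP.Z, Prod.mk_le_mk] at h
    obtain ⟨hF, hV, hS, hL, hK, hX⟩ := h
    have hm : (m:ℤ) ∣ p.tsum := hS ⟨p, rfl, rfl⟩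
    have hLK : ∀ B, p.IsBlock B → ∀ a ∈ B, ∀ b ∈ B, a ≠ b → p.Ioo a b ∩ B = ∅ →
        (m:ℤ) ∣ p.cdist a b := by
      intro B hB a ha b hb hne hIoo
      by_cases hc : p.ncolor a = p.ncolor b
      · exact hL ⟨p, rfl, B, hB, a, ha, b, hb, hne, hIoo, hc, rfl⟩
      · exact hK ⟨p, rfl, B, hB, a, ha, b, hb, hne, hIoo, hc, rfl⟩
    exact TCPAux.dvd_all p hm hLK B hB a ha _ b hb rfl
  · intro h
    have hm : (m:ℤ) ∣ p.tsum := by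
      by_cases hne : Nonempty p.Point
      · obtain ⟨x⟩ := hne
        have hx : x ∈ p.blockOf x :=
          Finset.mem_filter.mpr ⟨Finset.mem_univ x, p.rel.iseqv.refl x⟩
        have hh := h (p.blockOf x) ⟨x, rfl⟩ x hx x hx
        rwa [TCP.cdist, if_pos rfl] at hh
      · have he : IsEmpty p.Point := not_nonempty_iff.mp hne
        have : p.tsum = 0 := by simp [TCP.tsum, TCP.csum]
        rw [this]; exact dvd_zero _
    simp only [TCP.Z, Prod.mk_le_mk]
    refine ⟨Set.subset_univ _, Set.subset_univ _, ?_, ?_, ?_, Set.subset_univ _⟩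
    · rintro d ⟨p', hp', rfl⟩
      rw [Set.mem_singleton_iff] at hp'; subst hp'
      exact hm
    · rintro d ⟨p', hp', B, hB, a, ha, b, hb, hne, hIoo, hcol, rfl⟩
      rw [Set.mem_singleton_iff] at hp'; subst hp'
      exact h B hB a ha b hb
    · rintro d ⟨p', hp', B, hB, a, ha, b, hb, hne, hIoo, hcol, rfl⟩
      rw [Set.mem_singleton_iff] at hp'; subst hp'
      exact h B hB a ha b hb
end
end
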